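/- arXiv:1509.09002 — 5 statements merged into one kernel-verified Lean document; each statement's English description precedes it below -/
import Mathlib

section
/- For any ε, η ∈ (0,1) and any integer k ≥ 0, the maximum over s ∈ [0,1] of (1 + η·s)^k · (1 − ε − s) is at most 1 + 2·(1 + η·(1 − ε))^k / (η·(k + 1)). -/
/-- Lemma 1 of the paper. For any ε, η ∈ (0,1) and integer k ≥ 0,
the maximum over s ∈ [0,1] of (1 + η·s)^k·(1 − ε − s) is at most
1 + 2·(1 + η·(1 − ε))^k/(η·(k + 1)). -/
theorem max_aux_bound (ε η : ℝ) (hε : ε ∈ Set.Ioo (0 : ℝ) 1) (hη : η ∈ Set.Ioo (0 : ℝ) 1)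
    (k : ℕ) :
    ∀ s ∈ Set.Icc (0 : ℝ) 1,
      (1 + η * s) ^ k * (1 - ε - s) ≤ 1 + 2 * (1 + η * (1 - ε)) ^ k / (η * (k + 1)) := by
  obtain ⟨hε0, hε1⟩ := hε
  obtain ⟨hη0, hη1⟩ := hη
  rintro s ⟨hs0, hs1⟩
  set a := 1 + η * s with ha
  set b := 1 + η * (1 - ε) with hb
  have ha1 : 1 ≤ a := by nlinarith
  have ha0 : 0 < a := by linarith
  have hb1 : 1 ≤ b := by nlinarith
  have hb2 : b ≤ 2 := by nlinarith
  have hbk : (0:ℝ) ≤ b ^ k := by positivity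
  have hden : 0 < η * ((k : ℝ) + 1) := by positivity
  have hrhs0 : 0 ≤ 2 * b ^ k / (η * ((k : ℝ) + 1)) := by positivity
  rcases le_or_gt s (1 - ε) with hcase | hcase
  · have hab : a ≤ b := by nlinarith
    have hm : (-2 : ℝ) ≤ (b - a) / a := by
      have : 0 ≤ (b - a) / a := div_nonneg (by linarith) (le_of_lt ha0)
      linarith
    have hber := one_add_mul_le_pow hm (k + 1)
    have h1a : (1 + (b - a) / a) = b / a := by field_simp; ring
    rw [h1a] at hber
    have hak1 : (0:ℝ) ≤ a ^ (k + 1) := by positivity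
    have key : ((k : ℝ) + 1) * a ^ k * (b - a) ≤ b ^ (k + 1) := by
      have h2 := mul_le_mul_of_nonneg_right hber hak1
      have e1 : (b / a) ^ (k + 1) * a ^ (k + 1) = b ^ (k + 1) := by
        rw [div_pow]
        field_simp
      have e2 : (1 + (↑(k + 1) : ℝ) * ((b - a) / a)) * a ^ (k + 1)
          = a ^ (k + 1) + ((k : ℝ) + 1) * a ^ k * (b - a) := by
        push_cast
        field_simp
        ring
      rw [e1, e2] at h2
      nlinarith [pow_pos ha0 (k + 1)]
    have key2 : a ^ k * (b - a) * ((k : ℝ) + 1) ≤ 2 * b ^ k := by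
      have : b ^ (k + 1) = b * b ^ k := by ring
      nlinarith
    have hmain : a ^ k * (1 - ε - s) ≤ 2 * b ^ k / (η * ((k : ℝ) + 1)) := by
      rw [le_div_iff₀ hden]
      have hba : b - a = η * (1 - ε - s) := by rw [ha, hb]; ring
      have heq : a ^ k * (1 - ε - s) * (η * ((k : ℝ) + 1))
          = a ^ k * (b - a) * ((k : ℝ) + 1) := by rw [hba]; ring
      linarith [key2]
    linarith
  · have hak : (0:ℝ) < a ^ k := by positivity
    have : a ^ k * (1 - ε - s) ≤ 0 :=
      mul_nonpos_of_nonneg_of_nonpos (le_of_lt hak) (by linarith)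
    linarith
end

section
/- Let X be a nonnegative real random variable, and let α ∈ [0,1] and β ∈ (0,1] be such that E[X] ≥ α and, for every δ ∈ (0,1], P(X ≥ exp(β·√(log(1/δ)))) ≤ δ. Then P(X > α/2) ≥ (α − exp(−2/β²)) / 15. -/
open MeasureTheory

/-- Lemma 5 of the paper: a nonnegative random variable with large
expectation and sub-Gaussian-type upper tail is large with non-negligible probability. -/
theorem large_expectation_implies_probability
    (Ω : Type) (mΩ : MeasurableSpace Ω) (μ : Measure Ω) (hμ : IsProbabilityMeasure μ)
    (X : Ω → ℝ) (hXmeas : Measurable X) (hXint : Integrable X μ) (hXpos : ∀ ω, 0 ≤ X ω)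
    (α β : ℝ) (hα : α ∈ Set.Icc (0 : ℝ) 1) (hβ : β ∈ Set.Ioc (0 : ℝ) 1)
    (hmean : α ≤ ∫ ω, X ω ∂μ)
    (htail : ∀ δ ∈ Set.Ioc (0 : ℝ) 1,
      μ {ω | Real.exp (β * Real.sqrt (Real.log (1 / δ))) ≤ X ω} ≤ ENNReal.ofReal δ) :
    ENNReal.ofReal ((α - Real.exp (-2 / β ^ 2)) / 15) ≤ μ {ω | α / 2 < X ω} := by
  obtain ⟨hβ0, hβ1⟩ := hβ
  obtain ⟨hα0, hα1⟩ := hα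
  set E2 : ℝ := Real.exp (-2 / β ^ 2) with hE2
  by_cases hc : α ≤ E2
  · have h0 : (α - E2) / 15 ≤ 0 := by
      apply div_nonpos_of_nonpos_of_nonneg <;> linarith
    rw [ENNReal.ofReal_eq_zero.mpr h0]
    exact zero_le
  push_neg at hc
  have hE2pos : 0 < E2 := Real.exp_pos _
  have hα0' : 0 < α := lt_trans hE2pos hc
  set T : ℝ := Real.exp 2 with hT
  have hT1 : (1 : ℝ) < T := by
    rw [hT, show (1:ℝ) = Real.exp 0 from Real.exp_zero.symm]
    exact Real.exp_lt_exp.mpr (by norm_num)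
  have hT75 : T ≤ 15 / 2 := by
    have h2 : T = Real.exp 1 * Real.exp 1 := by rw [hT, ← Real.exp_add]; norm_num
    nlinarith [Real.exp_one_lt_d9, Real.exp_pos (1:ℝ)]
  have hαT : α / 2 < T := by linarith
  have hβ2 : (0:ℝ) < β ^ 2 := by positivity
  have hβ2le : β ^ 2 ≤ 1 := by nlinarith
  -- tail bound for t ≥ T
  have tailb : ∀ t : ℝ, T ≤ t →
      μ {ω | t < X ω} ≤ ENNReal.ofReal (Real.exp (4 - 2 / β ^ 2) * t ^ (-3 : ℝ)) := by
    intro t ht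
    have ht0 : (0:ℝ) < t := lt_of_lt_of_le (lt_trans one_pos hT1) ht
    set s : ℝ := Real.log t with hs
    have hs2 : 2 ≤ s := by
      rw [hs, Real.le_log_iff_exp_le ht0]; exact ht
    set δ : ℝ := Real.exp (-(s ^ 2) / β ^ 2) with hδ
    have hδ0 : 0 < δ := Real.exp_pos _
    have hδ1 : δ ≤ 1 := by
      rw [hδ, Real.exp_le_one_iff]
      apply div_nonpos_of_nonpos_of_nonneg
      · nlinarith
      · positivity
    have hkey := htail δ ⟨hδ0, hδ1⟩
    have hexp : Real.exp (β * Real.sqrt (Real.log (1 / δ))) = t := by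
      have hlog : Real.log (1 / δ) = (s / β) ^ 2 := by
        rw [one_div, Real.log_inv, hδ, Real.log_exp]
        field_simp
      rw [hlog, Real.sqrt_sq (by positivity : 0 ≤ s / β)]
      rw [mul_div_cancel₀ _ (ne_of_gt hβ0)]
      rw [hs, Real.exp_log ht0]
    rw [hexp] at hkey
    have hsub : {ω | t < X ω} ⊆ {ω | t ≤ X ω} := Set.setOf_subset_setOf.mpr (fun ω => le_of_lt)
    refine le_trans (le_trans (measure_mono hsub) hkey) (ENNReal.ofReal_le_ofReal ?_)
    -- δ ≤ exp (4 - 2/β²) * t^(-3)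
    have htrpow : t ^ (-3 : ℝ) = Real.exp (s * (-3)) := by
      rw [Real.rpow_def_of_pos ht0]
    rw [htrpow, ← Real.exp_add, hδ, Real.exp_le_exp]
    have hnum : 0 ≤ (4 - 3 * s) * β ^ 2 + s ^ 2 - 2 := by nlinarith
    have heq : 4 - 2 / β ^ 2 + s * (-3) - (-(s ^ 2) / β ^ 2)
        = ((4 - 3 * s) * β ^ 2 + s ^ 2 - 2) / β ^ 2 := by
      field_simp; ring
    nlinarith [div_nonneg hnum (le_of_lt hβ2), heq.symm.le, heq.le,
      div_nonneg hnum (le_of_lt hβ2)]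
  -- layer cake
  have hlc : ENNReal.ofReal α ≤ ∫⁻ t in Set.Ioi (0:ℝ), μ {ω | t < X ω} := by
    rw [← lintegral_eq_lintegral_meas_lt μ (Filter.Eventually.of_forall hXpos)
      hXmeas.aemeasurable,
      ← ofReal_integral_eq_lintegral_ofReal hXint (Filter.Eventually.of_forall hXpos)]
    exact ENNReal.ofReal_le_ofReal hmean
  set P : ENNReal := μ {ω | α / 2 < X ω} with hP
  have hPne : P ≠ ⊤ := measure_ne_top μ _
  set p : ℝ := P.toReal with hp
  have hp0 : 0 ≤ p := ENNReal.toReal_nonneg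
  -- split the integral
  have hsplit1 : Set.Ioi (0:ℝ) = Set.Ioc 0 (α/2) ∪ Set.Ioi (α/2) :=
    (Set.Ioc_union_Ioi_eq_Ioi (by linarith)).symm
  have hsplit2 : Set.Ioi (α/2) = Set.Ioc (α/2) T ∪ Set.Ioi T :=
    (Set.Ioc_union_Ioi_eq_Ioi (le_of_lt hαT)).symm
  have hint1 : ∫⁻ t in Set.Ioc (0:ℝ) (α/2), μ {ω | t < X ω} ≤ ENNReal.ofReal (α/2) := by
    calc ∫⁻ t in Set.Ioc (0:ℝ) (α/2), μ {ω | t < X ω}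
        ≤ ∫⁻ _ in Set.Ioc (0:ℝ) (α/2), 1 :=
          setLIntegral_mono measurable_const (fun t _ => prob_le_one)
      _ = volume (Set.Ioc (0:ℝ) (α/2)) := setLIntegral_one _
      _ = ENNReal.ofReal (α/2) := by rw [Real.volume_Ioc, sub_zero]
  have hint2 : ∫⁻ t in Set.Ioc (α/2) T, μ {ω | t < X ω} ≤ ENNReal.ofReal T * P := by
    calc ∫⁻ t in Set.Ioc (α/2) T, μ {ω | t < X ω}
        ≤ ∫⁻ _ in Set.Ioc (α/2) T, P := by
          apply setLIntegral_mono measurable_const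
          intro t ht
          exact measure_mono (fun ω hω => lt_of_le_of_lt (le_of_lt ht.1) hω)
      _ = P * volume (Set.Ioc (α/2) T) := setLIntegral_const _ _
      _ = volume (Set.Ioc (α/2) T) * P := mul_comm _ _
      _ ≤ ENNReal.ofReal T * P := by
          apply mul_le_mul_left
          rw [Real.volume_Ioc]
          exact ENNReal.ofReal_le_ofReal (by linarith)
  have hTpos : (0:ℝ) < T := Real.exp_pos _
  have hint3 : ∫⁻ t in Set.Ioi T, μ {ω | t < X ω} ≤ ENNReal.ofReal (E2 / 2) := by
    have hC : (0:ℝ) < Real.exp (4 - 2 / β ^ 2) := Real.exp_pos _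
    have hIntOn : IntegrableOn (fun t : ℝ => Real.exp (4 - 2 / β ^ 2) * t ^ (-3:ℝ))
        (Set.Ioi T) volume := by
      exact (integrableOn_Ioi_rpow_of_lt (by norm_num) hTpos).const_mul _
    calc ∫⁻ t in Set.Ioi T, μ {ω | t < X ω}
        ≤ ∫⁻ t in Set.Ioi T, ENNReal.ofReal (Real.exp (4 - 2 / β ^ 2) * t ^ (-3:ℝ)) := by
          have hm3 : Measurable (fun t : ℝ => t ^ (-3:ℝ)) := by
            have h : (fun t : ℝ => t ^ (-3:ℝ)) = fun t => (t ^ (3:ℕ))⁻¹ := by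
              funext t
              rw [show ((-3:ℝ)) = ((-3:ℤ):ℝ) by norm_num, Real.rpow_intCast]
              simp [zpow_neg]
            rw [h]
            exact (measurable_id.pow_const 3).inv
          apply setLIntegral_mono ((hm3.const_mul _).ennreal_ofReal)
          intro t ht
          exact tailb t (le_of_lt ht)
      _ = ENNReal.ofReal (∫ t in Set.Ioi T, Real.exp (4 - 2 / β ^ 2) * t ^ (-3:ℝ)) := by
          rw [ofReal_integral_eq_lintegral_ofReal hIntOn]
          filter_upwards [self_mem_ae_restrict (measurableSet_Ioi)] with t ht
          have ht0 : (0:ℝ) < t := lt_trans hTpos ht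
          positivity
      _ = ENNReal.ofReal (E2 / 2) := by
          congr 1
          rw [MeasureTheory.integral_const_mul, integral_Ioi_rpow_of_lt (by norm_num) hTpos]
          have : T ^ ((-3:ℝ) + 1) = Real.exp (-4) := by
            rw [Real.rpow_def_of_pos hTpos, hT, Real.log_exp]
            norm_num
          rw [this, hE2]
          rw [show (4 - 2 / β ^ 2 : ℝ) = -2 / β ^ 2 + 4 by ring, Real.exp_add]
          rw [show (-4:ℝ) = -(4:ℝ) by norm_num, Real.exp_neg]
          field_simp
          ring
  -- combine
  have hcomb : ENNReal.ofReal α ≤ ENNReal.ofReal (α/2) + ENNReal.ofReal T * P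
      + ENNReal.ofReal (E2 / 2) := by
    refine le_trans hlc ?_
    rw [hsplit1, lintegral_union measurableSet_Ioi
      (Set.Ioc_disjoint_Ioi le_rfl), hsplit2, lintegral_union measurableSet_Ioi
      (Set.Ioc_disjoint_Ioi le_rfl), ← add_assoc]
    exact add_le_add (add_le_add hint1 hint2) hint3
  have hTP : ENNReal.ofReal T * P = ENNReal.ofReal (T * p) := by
    rw [ENNReal.ofReal_mul (le_of_lt hTpos), hp, ENNReal.ofReal_toReal hPne]
  rw [hTP, ← ENNReal.ofReal_add (by linarith) (by positivity),
    ← ENNReal.ofReal_add (by positivity) (by positivity)] at hcomb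
  have hreal : α ≤ α/2 + T * p + E2/2 := by
    have := (ENNReal.ofReal_le_ofReal_iff (by positivity)).mp hcomb
    linarith
  -- final arithmetic
  have hfinal : (α - E2) / 15 ≤ p := by
    have h1 : α - E2 ≤ 2 * T * p := by linarith
    have h2 : 2 * T * p ≤ 15 * p := by nlinarith
    linarith
  calc ENNReal.ofReal ((α - E2) / 15) ≤ ENNReal.ofReal p := ENNReal.ofReal_le_ofReal hfinal
    _ = P := ENNReal.ofReal_toReal hPne
end

section
/- Let A be a d×d real symmetric positive semidefinite matrix whose eigenvalues all lie in [0,1] and whose largest eigenvalue equals 1, let v be a unit vector with A v = v, and let w₀ be a unit vector with ⟨v, w₀⟩² ≥ 1/p for some p ≥ 1. Then for any η > 0, ε ∈ (0,1) and integer T ≥ 1, w₀ᵀ (I + ηA)^{2T} ((1 − ε)I − A) w₀ ≤ −(1 + η)^{2T} · ε/p + max_{s ∈ [0,1]} (1 + η·s)^{2T} · (1 − ε − s). -/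
/-- The spectral (ℓ₂ operator) norm of a matrix. -/
noncomputable def specNorm {d : ℕ} (A : Matrix (Fin d) (Fin d) ℝ) : ℝ :=
  ‖Matrix.toEuclideanCLM (𝕜 := ℝ) A‖

/-- Euclidean norm of a vector. -/
noncomputable def vnorm {d : ℕ} (v : Fin d → ℝ) : ℝ := Real.sqrt (∑ i, v i ^ 2)

/-- Standard inner product on ℝ^d. -/
noncomputable def dot {d : ℕ} (u v : Fin d → ℝ) : ℝ := ∑ i, u i * v i

open Matrix

lemma dot_eq_dotProduct {d : ℕ} (u v : Fin d → ℝ) : dot u v = u ⬝ᵥ v := rfl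

lemma aux_conj_mul {d : ℕ} (U X Y : Matrix (Fin d) (Fin d) ℝ)
    (hU : star U * U = 1) :
    (U * X * star U) * (U * Y * star U) = U * (X * Y) * star U := by
  rw [show (U * X * star U) * (U * Y * star U) = U * X * (star U * U) * Y * star U by
    noncomm_ring, hU]
  noncomm_ring

lemma aux_conj_pow {d : ℕ} (U X : Matrix (Fin d) (Fin d) ℝ)
    (hU : star U * U = 1) (hU' : U * star U = 1) (n : ℕ) :
    (U * X * star U) ^ n = U * X ^ n * star U := by
  induction n with
  | zero => simp [pow_zero, ← mul_assoc, hU']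
  | succ k ih =>
      rw [pow_succ, pow_succ, ih, aux_conj_mul U _ _ hU]

/-- the deterministic term of the expectation bound. -/
theorem deterministic_term_bound
    (d : ℕ) (hd : 1 < d)
    (A : Matrix (Fin d) (Fin d) ℝ) (hA : A.PosSemidef)
    (heig : ∀ i, hA.1.eigenvalues i ∈ Set.Icc (0 : ℝ) 1)
    (htop : ∃ i₀, hA.1.eigenvalues i₀ = 1)
    (v : Fin d → ℝ) (hv : vnorm v = 1) (hAv : A.mulVec v = v)
    (w0 : Fin d → ℝ) (hw0 : vnorm w0 = 1)
    (p : ℝ) (hp : 1 ≤ p) (hcorr : 1 / p ≤ (dot v w0) ^ 2)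
    (η ε : ℝ) (hη : 0 < η) (hε : ε ∈ Set.Ioo (0 : ℝ) 1)
    (T : ℕ) (hT : 1 ≤ T) :
    dot w0 (((((1 : Matrix (Fin d) (Fin d) ℝ) + η • A) ^ (2 * T)) *
        ((1 - ε) • (1 : Matrix (Fin d) (Fin d) ℝ) - A)).mulVec w0) ≤
      -((1 + η) ^ (2 * T) * ε / p) +
        sSup ((fun s => (1 + η * s) ^ (2 * T) * (1 - ε - s)) '' Set.Icc (0 : ℝ) 1) := by
  classical
  set f : ℝ → ℝ := fun s => (1 + η * s) ^ (2 * T) * (1 - ε - s) with hf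
  set B : Matrix (Fin d) (Fin d) ℝ :=
    (((1 : Matrix (Fin d) (Fin d) ℝ) + η • A) ^ (2 * T)) *
      ((1 - ε) • (1 : Matrix (Fin d) (Fin d) ℝ) - A) with hBdef
  have hH : A.IsHermitian := hA.1
  set lam : Fin d → ℝ := hH.eigenvalues with hlam
  set U : Matrix (Fin d) (Fin d) ℝ := (hH.eigenvectorUnitary : Matrix (Fin d) (Fin d) ℝ)
    with hUdef
  have hU : star U * U = 1 := by
    rw [hUdef]
    exact Matrix.mem_unitaryGroup_iff'.mp (hH.eigenvectorUnitary).2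
  have hU' : U * star U = 1 := by
    rw [hUdef]
    exact Matrix.mem_unitaryGroup_iff.mp (hH.eigenvectorUnitary).2
  have hspec : A = U * diagonal lam * star U := by
    have := hH.spectral_theorem
    simpa [hUdef, hlam, Function.comp] using this
  -- B in diagonalized form
  have hB : B = U * diagonal (fun i => f (lam i)) * star U := by
    have h1 : (1 : Matrix (Fin d) (Fin d) ℝ) + η • A
        = U * diagonal (fun i => 1 + η * lam i) * star U := by
      rw [hspec]
      have hone : (1 : Matrix (Fin d) (Fin d) ℝ) = U * 1 * star U := by
        rw [mul_one, hU']
      rw [show diagonal (fun i => 1 + η * lam i)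
          = 1 + η • diagonal lam by
        ext i j
        by_cases hij : i = j
        · subst hij
          simp [Matrix.diagonal_apply_eq, Matrix.add_apply, Matrix.smul_apply,
            Matrix.one_apply_eq]
        · simp [Matrix.diagonal_apply_ne _ hij, Matrix.add_apply, Matrix.smul_apply,
            Matrix.one_apply_ne hij]]
      rw [Matrix.mul_add, Matrix.add_mul, ← hone, Matrix.mul_smul, Matrix.smul_mul]
    have h2 : (1 - ε) • (1 : Matrix (Fin d) (Fin d) ℝ) - A
        = U * diagonal (fun i => (1 - ε) - lam i) * star U := by
      rw [hspec]
      have hone : (1 - ε) • (1 : Matrix (Fin d) (Fin d) ℝ)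
          = U * ((1 - ε) • 1) * star U := by
        rw [Matrix.mul_smul, Matrix.smul_mul, mul_one, hU']
      rw [show diagonal (fun i => (1 - ε) - lam i)
          = (1 - ε) • 1 - diagonal lam by
        ext i j
        by_cases hij : i = j
        · subst hij
          simp [Matrix.diagonal_apply_eq, Matrix.sub_apply, Matrix.smul_apply,
            Matrix.one_apply_eq]
        · simp [Matrix.diagonal_apply_ne _ hij, Matrix.sub_apply, Matrix.smul_apply,
            Matrix.one_apply_ne hij]]
      rw [Matrix.mul_sub, Matrix.sub_mul, ← hone]
    rw [hBdef, h1, h2, aux_conj_pow U _ hU hU', aux_conj_mul U _ _ hU,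
      diagonal_pow, diagonal_mul_diagonal]
    congr 1
  have hstarU : star U = Uᵀ := by
    ext i j; simp [Matrix.star_eq_conjTranspose, Matrix.conjTranspose_apply]
  have hUUt : U * Uᵀ = 1 := by rw [← hstarU]; exact hU'
  -- quadratic form formula
  have qf : ∀ x : Fin d → ℝ, dot x (B.mulVec x)
      = ∑ i, f (lam i) * ((Uᵀ *ᵥ x) i) ^ 2 := by
    intro x
    rw [dot_eq_dotProduct, hB, hstarU, ← Matrix.mulVec_mulVec (v := x),
      ← Matrix.mulVec_mulVec (v := Uᵀ *ᵥ x),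
      Matrix.dotProduct_mulVec, ← Matrix.mulVec_transpose U x]
    unfold dotProduct
    apply Finset.sum_congr rfl
    intro i _
    rw [Matrix.mulVec_diagonal]
    ring
  -- norm preservation
  have normpres : ∀ x : Fin d → ℝ, ∑ i, ((Uᵀ *ᵥ x) i) ^ 2 = ∑ i, x i ^ 2 := by
    intro x
    have h : (Uᵀ *ᵥ x) ⬝ᵥ (Uᵀ *ᵥ x) = x ⬝ᵥ x := by
      rw [Matrix.dotProduct_mulVec (Uᵀ *ᵥ x) Uᵀ x, Matrix.vecMul_transpose,
        Matrix.mulVec_mulVec, hUUt, Matrix.one_mulVec]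
    simpa [dotProduct, pow_two] using h
  -- eigen-action of B on v
  have hBv : B.mulVec v = (-(ε * (1 + η) ^ (2 * T))) • v := by
    have h3 : ((1 - ε) • (1 : Matrix (Fin d) (Fin d) ℝ) - A) *ᵥ v = (-ε) • v := by
      rw [Matrix.sub_mulVec, Matrix.smul_mulVec, Matrix.one_mulVec, hAv]
      funext i
      simp
      ring
    have h4 : ∀ n : ℕ, (((1 : Matrix (Fin d) (Fin d) ℝ) + η • A) ^ n) *ᵥ v
        = ((1 + η) ^ n) • v := by
      intro n
      induction n with
      | zero => simp
      | succ k ih =>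
          rw [pow_succ', ← Matrix.mulVec_mulVec, ih, Matrix.mulVec_smul,
            Matrix.add_mulVec, Matrix.one_mulVec, Matrix.smul_mulVec, hAv,
            pow_succ']
          funext i
          simp
          ring
    rw [hBdef, ← Matrix.mulVec_mulVec, h3, Matrix.mulVec_smul, h4]
    funext i
    simp
    ring
  -- symmetry of B
  have hBsymm : Bᵀ = B := by
    rw [hB, hstarU, Matrix.transpose_mul, Matrix.transpose_mul,
      Matrix.transpose_transpose, Matrix.diagonal_transpose, mul_assoc]
  -- decomposition of w0
  set c : ℝ := dot v w0 with hc
  set w : Fin d → ℝ := w0 - c • v with hw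
  have hvv : (∑ i, v i ^ 2) = 1 := Real.sqrt_eq_one.mp hv
  have hw0w0 : (∑ i, w0 i ^ 2) = 1 := Real.sqrt_eq_one.mp hw0
  have hdvv : v ⬝ᵥ v = 1 := by
    simpa [dotProduct, pow_two] using hvv
  have hdw0 : w0 ⬝ᵥ w0 = 1 := by
    simpa [dotProduct, pow_two] using hw0w0
  have hvw0 : v ⬝ᵥ w0 = c := rfl
  have hw0v : w0 ⬝ᵥ v = c := by rw [dotProduct_comm]; exact hvw0
  have hvw : v ⬝ᵥ w = 0 := by
    rw [hw, dotProduct_sub, dotProduct_smul, hvw0, hdvv]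
    simp
  have hwv : w ⬝ᵥ v = 0 := by rw [dotProduct_comm]; exact hvw
  have hww : w ⬝ᵥ w = 1 - c ^ 2 := by
    rw [hw, dotProduct_sub, sub_dotProduct, sub_dotProduct,
      dotProduct_smul, smul_dotProduct, smul_dotProduct,
      dotProduct_smul, hdw0, hw0v, hvw0, hdvv]
    simp
    ring
  have hwsq : (∑ i, w i ^ 2) = 1 - c ^ 2 := by
    simpa [dotProduct, pow_two] using hww
  have hc2 : c ^ 2 ≤ 1 := by
    have := Finset.sum_mul_sq_le_sq_mul_sq Finset.univ v w0
    rw [hvv, hw0w0] at this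
    simpa [hc, dot] using this
  -- sSup facts
  set M : ℝ := sSup (f '' Set.Icc (0 : ℝ) 1) with hM
  have hfc : Continuous f := by
    apply Continuous.mul
    · exact (continuous_const.add (continuous_const.mul continuous_id)).pow _
    · exact continuous_const.sub continuous_id
  have hbdd : BddAbove (f '' Set.Icc (0 : ℝ) 1) :=
    (isCompact_Icc.image hfc).bddAbove
  have hfM : ∀ s ∈ Set.Icc (0 : ℝ) 1, f s ≤ M := fun s hs =>
    le_csSup hbdd ⟨s, hs, rfl⟩
  have hM0 : (0 : ℝ) ≤ M := by
    have h0 : f 0 ≤ M := hfM 0 ⟨le_refl _, zero_le_one⟩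
    have : f 0 = 1 - ε := by simp [hf]
    rw [this] at h0
    linarith [hε.2]
  -- bound on w part
  have hwBw : dot w (B.mulVec w) ≤ M * (1 - c ^ 2) := by
    rw [qf w]
    calc ∑ i, f (lam i) * ((Uᵀ *ᵥ w) i) ^ 2
        ≤ ∑ i, M * ((Uᵀ *ᵥ w) i) ^ 2 := by
          apply Finset.sum_le_sum
          intro i _
          exact mul_le_mul_of_nonneg_right (hfM _ (heig i)) (sq_nonneg _)
      _ = M * ∑ i, ((Uᵀ *ᵥ w) i) ^ 2 := by rw [Finset.mul_sum]
      _ = M * (1 - c ^ 2) := by rw [normpres w, hwsq]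
  -- expansion of the quadratic form at w0
  have hvB : v ᵥ* B = (-(ε * (1 + η) ^ (2 * T))) • v := by
    have h5 : v ᵥ* B = B *ᵥ v := by
      conv_lhs => rw [← hBsymm]
      rw [Matrix.vecMul_transpose]
    rw [h5, hBv]
  have expand : dot w0 (B.mulVec w0)
      = c ^ 2 * (-(ε * (1 + η) ^ (2 * T))) + dot w (B.mulVec w) := by
    have hw0eq : w0 = c • v + w := by
      rw [hw]; funext i; simp
    rw [dot_eq_dotProduct, dot_eq_dotProduct]
    conv_lhs => rw [hw0eq]
    have hvBw : v ⬝ᵥ (B *ᵥ w) = 0 := by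
      rw [Matrix.dotProduct_mulVec, hvB, smul_dotProduct, hvw]
      simp
    rw [Matrix.mulVec_add, Matrix.mulVec_smul, hBv]
    simp only [add_dotProduct, dotProduct_add, smul_dotProduct,
      dotProduct_smul, hdvv, hvBw, hwv, smul_eq_mul]
    ring
  -- final assembly
  have key1 : c ^ 2 * (-(ε * (1 + η) ^ (2 * T)))
      ≤ -((1 + η) ^ (2 * T) * ε / p) := by
    have hcoeff : -(ε * (1 + η) ^ (2 * T)) ≤ 0 := by
      have h1 : (0:ℝ) ≤ (1 + η) ^ (2 * T) := pow_nonneg (by linarith) _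
      nlinarith [hε.1]
    have := mul_le_mul_of_nonpos_right hcorr hcoeff
    calc c ^ 2 * (-(ε * (1 + η) ^ (2 * T)))
        ≤ (1 / p) * (-(ε * (1 + η) ^ (2 * T))) := this
      _ = -((1 + η) ^ (2 * T) * ε / p) := by ring
  have key2 : M * (1 - c ^ 2) ≤ M :=
    calc M * (1 - c ^ 2) ≤ M * 1 :=
          mul_le_mul_of_nonneg_left (by nlinarith [sq_nonneg c]) hM0
      _ = M := mul_one M
  calc dot w0 (B.mulVec w0)
      = c ^ 2 * (-(ε * (1 + η) ^ (2 * T))) + dot w (B.mulVec w) := expand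
    _ ≤ -((1 + η) ^ (2 * T) * ε / p) + M * (1 - c ^ 2) := add_le_add key1 hwBw
    _ ≤ -((1 + η) ^ (2 * T) * ε / p) + M := add_le_add_right key2 _
end

section
/- For any β ∈ (0,1] and any real r₂ ≥ exp(2β²), the integral ∫_{r₂}^{∞} exp(−(log z / β)²) dz is at most (β / log(r₂)) · exp(−(log r₂)² / (2β²)). -/
open MeasureTheory Real Filter Set

set_option maxHeartbeats 1000000 in
/-- the Gaussian-type tail integral bound from the proof of Lemma 5. -/
theorem tail_integral_bound (β : ℝ) (hβ : β ∈ Set.Ioc (0 : ℝ) 1)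
    (r₂ : ℝ) (hr₂ : Real.exp (2 * β ^ 2) ≤ r₂) :
    (∫ z in Set.Ici r₂, Real.exp (-(Real.log z / β) ^ 2)) ≤
      (β / Real.log r₂) * Real.exp (-(Real.log r₂) ^ 2 / (2 * β ^ 2)) := by
  obtain ⟨hβ0, hβ1⟩ := hβ
  set L := Real.log r₂ with hLdef
  have hr₂0 : (0:ℝ) < r₂ := lt_of_lt_of_le (Real.exp_pos _) hr₂
  have hL : 2 * β ^ 2 ≤ L := (Real.le_log_iff_exp_le hr₂0).2 hr₂
  have hL0 : 0 < L := lt_of_lt_of_le (by positivity) hL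
  set ψ : ℝ → ℝ := fun z => Real.log z / (L * β * z) * Real.exp (-(Real.log z) ^ 2 / (2 * β ^ 2)) with hψdef
  set φ : ℝ → ℝ := fun z => -(β / L) * Real.exp (-(Real.log z) ^ 2 / (2 * β ^ 2)) with hφdef
  -- derivative
  have hderiv : ∀ z ∈ Ioi r₂, HasDerivAt φ (ψ z) z := by
    intro z hz
    have hz0 : (0:ℝ) < z := lt_trans hr₂0 hz
    have h1 : HasDerivAt Real.log z⁻¹ z := Real.hasDerivAt_log (ne_of_gt hz0)
    have h2 := (((h1.fun_pow 2).fun_neg.div_const (2 * β ^ 2)).exp).const_mul (-(β / L))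
    convert h2 using 1
    · rfl
    · rfl
    simp only [hψdef]
    field_simp
    ring
  -- key pointwise bound
  have key : ∀ z, r₂ ≤ z → Real.exp (-(Real.log z / β) ^ 2) ≤ ψ z := by
    intro z hz
    have hz0 : (0:ℝ) < z := lt_of_lt_of_le hr₂0 hz
    set t := Real.log z with htdef
    have ht : L ≤ t := Real.log_le_log (by positivity) hz
    have ht0 : 0 < t := lt_of_lt_of_le hL0 ht
    have hz_eq : z = Real.exp t := (Real.exp_log hz0).symm
    have key1 : L * β * Real.exp (-(t ^ 2 / (2 * β ^ 2))) ≤ t * Real.exp (-t) := by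
      have h1 : Real.exp (-(t ^ 2 / (2 * β ^ 2))) ≤ Real.exp (-t) := by
        apply Real.exp_le_exp.2
        rw [neg_le_neg_iff, le_div_iff₀ (by positivity)]
        nlinarith
      have h2 : L * β ≤ t := by nlinarith
      nlinarith [Real.exp_pos (-t), Real.exp_pos (-(t ^ 2 / (2 * β ^ 2)))]
    have e1 : Real.exp (t - t ^ 2 / β ^ 2)
        = Real.exp (-(t ^ 2 / (2 * β ^ 2))) * Real.exp (t - t ^ 2 / (2 * β ^ 2)) := by
      rw [← Real.exp_add]; congr 1; field_simp; ring
    have e2 : Real.exp (-t) * Real.exp (t - t ^ 2 / (2 * β ^ 2))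
        = Real.exp (-t ^ 2 / (2 * β ^ 2)) := by
      rw [← Real.exp_add]; congr 1; ring
    have e3 : Real.exp (-(t / β) ^ 2) * Real.exp t = Real.exp (t - t ^ 2 / β ^ 2) := by
      rw [← Real.exp_add]; congr 1; field_simp; ring
    have key2 : L * β * Real.exp (t - t ^ 2 / β ^ 2) ≤ t * Real.exp (-t ^ 2 / (2 * β ^ 2)) := by
      have h := mul_le_mul_of_nonneg_right key1 (Real.exp_pos (t - t ^ 2 / (2 * β ^ 2))).le
      calc L * β * Real.exp (t - t ^ 2 / β ^ 2)
          = L * β * Real.exp (-(t ^ 2 / (2 * β ^ 2))) * Real.exp (t - t ^ 2 / (2 * β ^ 2)) := by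
            rw [e1]; ring
        _ ≤ t * Real.exp (-t) * Real.exp (t - t ^ 2 / (2 * β ^ 2)) := h
        _ = t * Real.exp (-t ^ 2 / (2 * β ^ 2)) := by rw [mul_assoc, e2]
    have hpos : 0 < L * β * z := by positivity
    show Real.exp (-(t / β) ^ 2) ≤ t / (L * β * z) * Real.exp (-t ^ 2 / (2 * β ^ 2))
    rw [div_mul_eq_mul_div, le_div_iff₀ hpos]
    calc Real.exp (-(t / β) ^ 2) * (L * β * z)
        = L * β * (Real.exp (-(t / β) ^ 2) * Real.exp t) := by rw [hz_eq]; ring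
      _ = L * β * Real.exp (t - t ^ 2 / β ^ 2) := by rw [e3]
      _ ≤ t * Real.exp (-t ^ 2 / (2 * β ^ 2)) := key2
  -- ψ nonneg on Ioi r₂
  have hψ_nonneg : ∀ z ∈ Ioi r₂, 0 ≤ ψ z := by
    intro z hz
    have hz0 : (0:ℝ) < z := lt_trans hr₂0 hz
    have hlog : 0 ≤ Real.log z := le_of_lt (lt_of_lt_of_le hL0 (Real.log_le_log hr₂0 hz.le))
    exact mul_nonneg (div_nonneg hlog (by positivity)) (Real.exp_pos _).le
  -- continuity of φ on Ici r₂
  have hφcont : ContinuousOn φ (Ici r₂) := by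
    have hlogc : ContinuousOn Real.log (Ici r₂) :=
      Real.continuousOn_log.mono (fun z hz => by
        simp only [mem_compl_iff, mem_singleton_iff]
        exact ne_of_gt (lt_of_lt_of_le hr₂0 hz))
    exact continuousOn_const.mul (Real.continuous_exp.comp_continuousOn
      (((hlogc.pow 2).neg).div_const _))
  -- tendsto of φ at atTop
  have hφtendsto : Tendsto φ atTop (nhds 0) := by
    have hc : (0:ℝ) < 2 * β ^ 2 := by positivity
    have hsq : Tendsto (fun z : ℝ => Real.log z ^ 2) atTop atTop :=
      (tendsto_pow_atTop two_ne_zero).comp Real.tendsto_log_atTop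
    have h1 : Tendsto (fun z : ℝ => -(Real.log z) ^ 2 / (2 * β ^ 2)) atTop atBot := by
      have h := tendsto_neg_atTop_atBot.comp (hsq.atTop_div_const hc)
      simpa [neg_div, Function.comp_def] using h
    have h2 := (Real.tendsto_exp_atBot.comp h1).const_mul (-(β / L))
    rw [mul_zero] at h2
    exact h2
  -- ψ integrable
  have hψ_int : IntegrableOn ψ (Ioi r₂) :=
    integrableOn_Ioi_deriv_of_nonneg (hφcont r₂ self_mem_Ici) hderiv hψ_nonneg hφtendsto
  have hψ_integral : ∫ z in Ioi r₂, ψ z = (β / L) * Real.exp (-L ^ 2 / (2 * β ^ 2)) := by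
    rw [integral_Ioi_of_hasDerivAt_of_tendsto (hφcont r₂ self_mem_Ici) hderiv hψ_int hφtendsto]
    simp only [hφdef, hLdef]
    ring
  -- integrability of f
  have hf_meas : AEStronglyMeasurable (fun z => Real.exp (-(Real.log z / β) ^ 2))
      (volume.restrict (Ioi r₂)) := by
    exact (Real.measurable_exp.comp
      (((Real.measurable_log.div_const β).pow_const 2).neg)).aestronglyMeasurable
  have hf_int : IntegrableOn (fun z => Real.exp (-(Real.log z / β) ^ 2)) (Ioi r₂) := by
    apply hψ_int.mono' hf_meas
    rw [ae_restrict_iff' measurableSet_Ioi]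
    filter_upwards with z hz
    rw [Real.norm_eq_abs, abs_of_pos (Real.exp_pos _)]
    exact key z hz.le
  calc (∫ z in Set.Ici r₂, Real.exp (-(Real.log z / β) ^ 2))
      = ∫ z in Set.Ioi r₂, Real.exp (-(Real.log z / β) ^ 2) := integral_Ici_eq_integral_Ioi
    _ ≤ ∫ z in Set.Ioi r₂, ψ z :=
        setIntegral_mono_on hf_int hψ_int measurableSet_Ioi (fun z hz => key z hz.le)
    _ = (β / L) * Real.exp (-L ^ 2 / (2 * β ^ 2)) := hψ_integral
end

section
/- Let A be a d×d real symmetric positive semidefinite matrix, v₁ a unit vector with A v₁ = ‖A‖ v₁, Ã any d×d real symmetric matrix, and w ∈ ℝ^d a vector with Ã w ≠ 0. Set Δ = ‖Ã − A‖ and w₀ = Ã w / ‖Ã w‖. If ⟨v₁, A w⟩² − 2·|⟨v₁, A w⟩|·‖w‖·Δ > 0, then 1/⟨v₁, w₀⟩² ≤ (2‖A w‖² + 2‖w‖²·Δ²) / (⟨v₁, A w⟩² − 2·|⟨v₁, A w⟩|·‖w‖·Δ). -/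
lemma vnorm_eq {d : ℕ} (v : Fin d → ℝ) :
    vnorm v = ‖(WithLp.equiv 2 (Fin d → ℝ)).symm v‖ := by
  rw [EuclideanSpace.norm_eq, vnorm]
  simp [Real.norm_eq_abs, sq_abs]

lemma dot_eq {d : ℕ} (u v : Fin d → ℝ) :
    dot u v = inner ℝ ((WithLp.equiv 2 (Fin d → ℝ)).symm u) ((WithLp.equiv 2 (Fin d → ℝ)).symm v) := by
  rw [PiLp.inner_apply, dot]
  simp [RCLike.inner_apply, mul_comm]

lemma opnorm_bound {d : ℕ} (A : Matrix (Fin d) (Fin d) ℝ) (w : Fin d → ℝ) :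
    vnorm (A.mulVec w) ≤ specNorm A * vnorm w := by
  rw [vnorm_eq, vnorm_eq, ← Matrix.toLin'_apply, WithLp.equiv_symm_apply, Matrix.toLin'_apply, ← Matrix.toEuclideanCLM_toLp]
  exact (Matrix.toEuclideanCLM (𝕜 := ℝ) A).le_opNorm _

lemma cauchy {d : ℕ} (u v : Fin d → ℝ) : |dot u v| ≤ vnorm u * vnorm v := by
  rw [dot_eq, vnorm_eq, vnorm_eq]
  exact abs_real_inner_le_norm _ _

lemma dot_sub {d : ℕ} (u x y : Fin d → ℝ) : dot u x - dot u y = dot u (x - y) := by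
  simp [dot, Finset.sum_sub_distrib, mul_sub]

lemma dot_smul {d : ℕ} (u : Fin d → ℝ) (c : ℝ) (v : Fin d → ℝ) :
    dot u (c • v) = c * dot u v := by
  simp [dot, Finset.mul_sum, mul_assoc, mul_left_comm]

/-- the deterministic inequality from the proof of Lemma 2. -/
theorem power_iteration_correlation_bound
    (d : ℕ) (hd : 1 < d)
    (A : Matrix (Fin d) (Fin d) ℝ) (hA : A.PosSemidef)
    (v₁ : Fin d → ℝ) (hv₁ : vnorm v₁ = 1) (hAv₁ : A.mulVec v₁ = specNorm A • v₁)
    (Atil : Matrix (Fin d) (Fin d) ℝ) (hAtil : Atil.IsSymm)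
    (w : Fin d → ℝ) (hw : Atil.mulVec w ≠ 0)
    (Δ : ℝ) (hΔ : Δ = specNorm (Atil - A))
    (w₀ : Fin d → ℝ) (hw₀ : w₀ = (vnorm (Atil.mulVec w))⁻¹ • Atil.mulVec w)
    (hdenom : 0 < (dot v₁ (A.mulVec w)) ^ 2 - 2 * |dot v₁ (A.mulVec w)| * vnorm w * Δ) :
    1 / (dot v₁ w₀) ^ 2 ≤
      (2 * vnorm (A.mulVec w) ^ 2 + 2 * vnorm w ^ 2 * Δ ^ 2) /
        ((dot v₁ (A.mulVec w)) ^ 2 - 2 * |dot v₁ (A.mulVec w)| * vnorm w * Δ) := by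
  set a := dot v₁ (A.mulVec w) with ha
  set t := dot v₁ (Atil.mulVec w) with ht
  set n := vnorm (A.mulVec w) with hn
  set nt := vnorm (Atil.mulVec w) with hnt
  set wn := vnorm w with hwn
  have hΔ0 : 0 ≤ Δ := hΔ ▸ norm_nonneg _
  have hwn0 : 0 ≤ wn := Real.sqrt_nonneg _
  have hn0 : 0 ≤ n := Real.sqrt_nonneg _
  have hntpos : 0 < nt := by
    rw [hnt, vnorm_eq]
    simpa using hw
  -- error bound
  have herr : vnorm (Atil.mulVec w - A.mulVec w) ≤ Δ * wn := by
    rw [hΔ, ← Matrix.sub_mulVec]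
    exact opnorm_bound _ _
  have herrn : 0 ≤ vnorm (Atil.mulVec w - A.mulVec w) := Real.sqrt_nonneg _
  have hε : |t - a| ≤ Δ * wn := by
    rw [ht, ha, dot_sub]
    calc |dot v₁ (Atil.mulVec w - A.mulVec w)| ≤ vnorm v₁ * vnorm (Atil.mulVec w - A.mulVec w) :=
          cauchy _ _
      _ = vnorm (Atil.mulVec w - A.mulVec w) := by rw [hv₁, one_mul]
      _ ≤ Δ * wn := herr
  -- triangle inequality
  have htri : nt ≤ n + Δ * wn := by
    have : nt ≤ n + vnorm (Atil.mulVec w - A.mulVec w) := by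
      rw [hnt, hn, vnorm_eq, vnorm_eq, vnorm_eq]
      have := norm_sub_norm_le ((WithLp.equiv 2 (Fin d → ℝ)).symm (Atil.mulVec w))
        ((WithLp.equiv 2 (Fin d → ℝ)).symm (A.mulVec w))
      have heq : (WithLp.equiv 2 (Fin d → ℝ)).symm (Atil.mulVec w - A.mulVec w) =
          (WithLp.equiv 2 (Fin d → ℝ)).symm (Atil.mulVec w) -
            (WithLp.equiv 2 (Fin d → ℝ)).symm (A.mulVec w) := rfl
      rw [heq]
      linarith
    linarith
  have hnum : nt ^ 2 ≤ 2 * n ^ 2 + 2 * wn ^ 2 * Δ ^ 2 := by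
    nlinarith [sq_nonneg (n - Δ * wn), hntpos.le]
  have hden : a ^ 2 - 2 * |a| * wn * Δ ≤ t ^ 2 := by
    nlinarith [neg_abs_le (a * (t - a)), abs_mul a (t - a), sq_nonneg (t - a),
      mul_le_mul_of_nonneg_left hε (abs_nonneg a), sq_abs a]
  have ht2pos : 0 < t ^ 2 := lt_of_lt_of_le hdenom hden
  have htne : t ≠ 0 := by
    intro h; rw [h] at ht2pos; simp at ht2pos
  have hdw : dot v₁ w₀ = nt⁻¹ * t := by
    rw [hw₀, dot_smul]
  rw [hdw]
  have h1 : 1 / (nt⁻¹ * t) ^ 2 = nt ^ 2 / t ^ 2 := by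
    field_simp
  rw [h1]
  exact div_le_div₀ (by nlinarith) hnum hdenom hden
end
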